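/- arXiv:math/0011068 — 5 statements merged into one kernel-verified Lean document; each statement's English description precedes it below -/
import Mathlib

section
/- The set L = {(0,1), (1,2), (2,0), (1,1)} ⊆ Z^2 is a dps set of cardinality 4 = 2^2, hence a maximal dps set in Z^2. -/
/-- `L` is a distinct pair-sum (dps) set. -/
def IsDPS {n : ℕ} (L : Finset (Fin n → ℤ)) : Prop :=
  ∀ v ∈ L, ∀ w ∈ L, ∀ v' ∈ L, ∀ w' ∈ L,
    v + w = v' + w' → (v = v' ∧ w = w') ∨ (v = w' ∧ w = v')

theorem example1_maximal_dps :
    IsDPS ({![0, 1], ![1, 2], ![2, 0], ![1, 1]} : Finset (Fin 2 → ℤ)) ∧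
    ({![0, 1], ![1, 2], ![2, 0], ![1, 1]} : Finset (Fin 2 → ℤ)).card = 2 ^ 2 := by
  constructor
  · intro v hv w hw v' hv' w' hw'
    fin_cases hv <;> fin_cases hw <;> fin_cases hv' <;> fin_cases hw' <;> decide
  · decide
end

section
/- The set of lattice points in the convex hull of A ∪ B in R^4, where A = {(4,1,0,0), (0,4,1,0), (0,0,4,1), (1,0,0,4)} and B = {(2,1,1,1), (1,2,1,1), (1,1,2,1), (1,1,1,2)}, is exactly A ∪ B. -/
/-!
The points of `B` lie in the simplex `conv A`: on the hyperplane `x₀ + x₁ + x₂ + x₃ = 5` the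
barycentric coordinates with respect to `A` are `λₖ = (51 - cₖ ⬝ x) / 204`, where the `cₖ` are the
cyclic shifts of `(-41, 11, 7, 23)`. So `conv (A ∪ B)` lies in the polytope `exP ℝ` cut out by
`cₖ ⬝ x ≤ 51`.
Its lattice points have all coordinates in `[0, 4]`, and enumerating them gives `A ∪ B`.
-/

open Matrix

def toR {n : ℕ} (z : Fin n → ℤ) : Fin n → ℝ := fun i => (z i : ℝ)

def exA : Set (Fin 4 → ℤ) :=
  {![4, 1, 0, 0], ![0, 4, 1, 0], ![0, 0, 4, 1], ![1, 0, 0, 4]}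

def exB : Set (Fin 4 → ℤ) :=
  {![2, 1, 1, 1], ![1, 2, 1, 1], ![1, 1, 2, 1], ![1, 1, 1, 2]}

def exP (R : Type*) [Ring R] [LE R] : Set (Fin 4 → R) :=
  {x | ∑ i, x i = 5 ∧ ∀ k : Fin 4, ∑ i, (![-41, 11, 7, 23] (i + k) : ℤ) * x i ≤ 51}

lemma isLinearMap_dotProduct {m R : Type*} [Fintype m] [CommSemiring R] (a : m → R) :
    IsLinearMap R (a ⬝ᵥ ·) :=
  ⟨dotProduct_add a, fun c x => dotProduct_smul c a x⟩

lemma convex_exP : Convex ℝ (exP ℝ) := by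
  have hP : exP ℝ = {x | 1 ⬝ᵥ x = 5} ∩
      ⋂ k : Fin 4, {x | (fun i => ((![-41, 11, 7, 23] (i + k) : ℤ) : ℝ)) ⬝ᵥ x ≤ 51} := by
    ext x
    simp [exP, dotProduct]
  rw [hP]
  exact (convex_hyperplane (isLinearMap_dotProduct _) _).inter
    (convex_iInter fun _ => convex_halfSpace_le (isLinearMap_dotProduct _) _)

lemma toR_mem_exP_iff (z : Fin 4 → ℤ) : toR z ∈ exP ℝ ↔ z ∈ exP ℤ := by
  simp only [exP, Set.mem_ofPred_eq, toR]
  norm_cast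

lemma exP_int_eq : exP ℤ = exA ∪ exB := by
  ext z
  constructor
  · intro hz
    obtain ⟨a, b, c, d, rfl⟩ : ∃ a b c d, z = ![a, b, c, d] :=
      ⟨z 0, z 1, z 2, z 3, by ext i; fin_cases i <;> rfl⟩
    obtain ⟨hsum, h0, h1, h2, h3⟩ : a + b + c + d = 5 ∧
        -41 * a + 11 * b + 7 * c + 23 * d ≤ 51 ∧ 11 * a + 7 * b + 23 * c - 41 * d ≤ 51 ∧
        7 * a + 23 * b - 41 * c + 11 * d ≤ 51 ∧ 23 * a - 41 * b + 11 * c + 7 * d ≤ 51 := by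
      simpa [exP, Fin.sum_univ_four, Fin.forall_fin_succ, sub_eq_add_neg] using hz
    obtain rfl : d = 5 - a - b - c := by omega
    obtain ⟨ha0, ha4, hb0, hb4, hc0, hc4⟩ : 0 ≤ a ∧ a ≤ 4 ∧ 0 ≤ b ∧ b ≤ 4 ∧ 0 ≤ c ∧ c ≤ 4 := by
      omega
    interval_cases a <;> interval_cases b <;> interval_cases c <;>
      first | omega | simp [exA, exB]
  · rintro ((rfl | rfl | rfl | rfl) | (rfl | rfl | rfl | rfl)) <;> exact ⟨by decide, by decide⟩

lemma convexHull_subset_exP : convexHull ℝ (toR '' (exA ∪ exB)) ⊆ exP ℝ := by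
  refine convexHull_min ?_ convex_exP
  rintro _ ⟨z, hz, rfl⟩
  rw [toR_mem_exP_iff, exP_int_eq]
  exact hz

theorem example2_lattice_points :
    {z : Fin 4 → ℤ | toR z ∈ convexHull ℝ (toR '' (exA ∪ exB))} = exA ∪ exB := by
  ext z
  constructor
  · intro hz
    rw [← exP_int_eq, ← toR_mem_exP_iff]
    exact convexHull_subset_exP hz
  · intro hz
    exact subset_convexHull ℝ _ ⟨z, hz, rfl⟩
end

section
/- For every n ≥ 1, there exists a dps set L ⊆ Z^n with |L| = 2^n. -/
private lemma pow2_inj {a b : ℕ} (h : 2 ^ a = 2 ^ b) : a = b :=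
  Nat.pow_right_injective (le_refl 2) h

private lemma key (a : ℕ) : ∀ b c d : ℕ, 2 ^ a + 2 ^ b = 2 ^ c + 2 ^ d →
    (a = c ∧ b = d) ∨ (a = d ∧ b = c) := by
  induction a with
  | zero =>
    intro b c d h
    match b, c, d with
    | 0, c, d =>
      have hc : (1:ℕ) ≤ 2 ^ c := Nat.one_le_two_pow
      have hd : (1:ℕ) ≤ 2 ^ d := Nat.one_le_two_pow
      have hc0 : 2 ^ c = 1 := by omega
      have hd0 : 2 ^ d = 1 := by omega
      have : c = 0 := pow2_inj (a := c) (b := 0) hc0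
      have : d = 0 := pow2_inj (a := d) (b := 0) hd0
      omega
    | b + 1, 0, d =>
      left
      exact ⟨rfl, pow2_inj (by omega)⟩
    | b + 1, c + 1, 0 =>
      right
      exact ⟨rfl, pow2_inj (by omega)⟩
    | b + 1, c + 1, d + 1 =>
      exfalso
      have h1 : 2 ^ (b + 1) = 2 * 2 ^ b := by ring
      have h2 : 2 ^ (c + 1) = 2 * 2 ^ c := by ring
      have h3 : 2 ^ (d + 1) = 2 * 2 ^ d := by ring
      omega
  | succ a ih =>
    intro b c d h
    match b, c, d with
    | 0, 0, d =>
      right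
      exact ⟨pow2_inj (by omega), rfl⟩
    | 0, c + 1, 0 =>
      left
      exact ⟨pow2_inj (by omega), rfl⟩
    | 0, c + 1, d + 1 =>
      exfalso
      have h1 : 2 ^ (a + 1) = 2 * 2 ^ a := by ring
      have h2 : 2 ^ (c + 1) = 2 * 2 ^ c := by ring
      have h3 : 2 ^ (d + 1) = 2 * 2 ^ d := by ring
      omega
    | b + 1, 0, 0 =>
      exfalso
      have h1 : 2 ^ (a + 1) = 2 * 2 ^ a := by ring
      have h2 : 2 ^ (b + 1) = 2 * 2 ^ b := by ring
      have ha : (1:ℕ) ≤ 2 ^ a := Nat.one_le_two_pow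
      have hb : (1:ℕ) ≤ 2 ^ b := Nat.one_le_two_pow
      omega
    | b + 1, 0, d + 1 =>
      exfalso
      have h1 : 2 ^ (a + 1) = 2 * 2 ^ a := by ring
      have h2 : 2 ^ (b + 1) = 2 * 2 ^ b := by ring
      have h3 : 2 ^ (d + 1) = 2 * 2 ^ d := by ring
      omega
    | b + 1, c + 1, 0 =>
      exfalso
      have h1 : 2 ^ (a + 1) = 2 * 2 ^ a := by ring
      have h2 : 2 ^ (b + 1) = 2 * 2 ^ b := by ring
      have h3 : 2 ^ (c + 1) = 2 * 2 ^ c := by ring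
      omega
    | b + 1, c + 1, d + 1 =>
      have h1 : 2 ^ (a + 1) = 2 * 2 ^ a := by ring
      have h2 : 2 ^ (b + 1) = 2 * 2 ^ b := by ring
      have h3 : 2 ^ (c + 1) = 2 * 2 ^ c := by ring
      have h4 : 2 ^ (d + 1) = 2 * 2 ^ d := by ring
      have h' : 2 ^ a + 2 ^ b = 2 ^ c + 2 ^ d := by omega
      rcases ih b c d h' with ⟨e1, e2⟩ | ⟨e1, e2⟩
      · left; omega
      · right; omega

theorem exists_maximal_dps (n : ℕ) (hn : 1 ≤ n) :
    ∃ L : Finset (Fin n → ℤ), IsDPS L ∧ L.card = 2 ^ n := by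
  set i0 : Fin n := ⟨0, hn⟩ with hi0
  set f : ℕ → (Fin n → ℤ) := fun k j => if j = i0 then (2 : ℤ) ^ k else 0 with hf
  have hfi0 : ∀ k, f k i0 = (2 : ℤ) ^ k := by intro k; simp [hf]
  have hinj : ∀ {a b : ℕ}, f a = f b → a = b := by
    intro a b h
    have h0 : (2 : ℤ) ^ a = (2 : ℤ) ^ b := by
      have := congrFun h i0
      simpa [hfi0] using this
    have : (2 ^ a : ℕ) = 2 ^ b := by exact_mod_cast h0
    exact pow2_inj this
  refine ⟨(Finset.range (2 ^ n)).image f, ?_, ?_⟩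
  · intro v hv w hw v' hv' w' hw' hsum
    simp only [Finset.mem_image, Finset.mem_range] at hv hw hv' hw'
    obtain ⟨a, -, rfl⟩ := hv
    obtain ⟨b, -, rfl⟩ := hw
    obtain ⟨c, -, rfl⟩ := hv'
    obtain ⟨d, -, rfl⟩ := hw'
    have h0 : (2 : ℤ) ^ a + 2 ^ b = 2 ^ c + 2 ^ d := by
      have := congrFun hsum i0
      simpa [hfi0] using this
    have hN : (2 ^ a + 2 ^ b : ℕ) = 2 ^ c + 2 ^ d := by exact_mod_cast h0
    rcases key a b c d hN with ⟨e1, e2⟩ | ⟨e1, e2⟩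
    · left; rw [e1, e2]; exact ⟨rfl, rfl⟩
    · right; rw [e1, e2]; exact ⟨rfl, rfl⟩
  · rw [Finset.card_image_of_injective _ (fun a b h => hinj h), Finset.card_range]
end

section
/- Let L ⊆ Z^n be a finite dps set with difference set D = {v - v' : v, v' ∈ L, v ≠ v'}, and let M be an n×n unimodular integer matrix such that M(u) ∉ D for every u ∈ D. Then L' = {(v, 0) : v ∈ L} ∪ {(Mv, 1) : v ∈ L} ⊆ Z^{n+1} is a dps set of cardinality 2|L|. -/
private lemma snoc_add {n : ℕ} (v w : Fin n → ℤ) (a b : ℤ) :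
    (Fin.snoc v a : Fin (n + 1) → ℤ) + Fin.snoc w b = Fin.snoc (v + w) (a + b) := by
  funext i
  refine Fin.lastCases ?_ ?_ i <;> simp

private lemma snoc_inj {n : ℕ} {v w : Fin n → ℤ} {a b : ℤ}
    (h : (Fin.snoc v a : Fin (n + 1) → ℤ) = Fin.snoc w b) : v = w ∧ a = b := by
  constructor
  · funext i
    have := congrFun h (Fin.castSucc i)
    simpa using this
  · have := congrFun h (Fin.last n)
    simpa using this

theorem dps_doubling {n : ℕ} (L : Finset (Fin n → ℤ)) (hL : IsDPS L)
    (D : Set (Fin n → ℤ))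
    (hD : D = {u | ∃ v ∈ L, ∃ v' ∈ L, v ≠ v' ∧ u = v - v'})
    (M : Matrix (Fin n) (Fin n) ℤ) (hM : M.det = 1 ∨ M.det = -1)
    (hMD : ∀ u ∈ D, M.mulVec u ∉ D) :
    IsDPS ((L.image fun v => (Fin.snoc v 0 : Fin (n + 1) → ℤ)) ∪
        (L.image fun v => (Fin.snoc (M.mulVec v) 1 : Fin (n + 1) → ℤ))) ∧
    ((L.image fun v => (Fin.snoc v 0 : Fin (n + 1) → ℤ)) ∪
        (L.image fun v => (Fin.snoc (M.mulVec v) 1 : Fin (n + 1) → ℤ))).card = 2 * L.card := by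
  have hdet : IsUnit M.det := by
    rcases hM with h | h
    · rw [h]; exact isUnit_one
    · rw [h]; exact isUnit_one.neg
  have : Invertible M := M.invertibleOfIsUnitDet hdet
  have Minj : Function.Injective M.mulVec := by
    intro x y h
    have h2 := congrArg (⅟M).mulVec h
    simpa [Matrix.mulVec_mulVec] using h2
  have mixed : ∀ v ∈ L, ∀ w ∈ L, ∀ v' ∈ L, ∀ w' ∈ L,
      v + M.mulVec w = v' + M.mulVec w' → v = v' ∧ w = w' := by
    intro v hv w hw v' hv' w' hw' h
    by_cases hvv : v = v'
    · subst hvv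
      exact ⟨rfl, Minj (add_left_cancel h)⟩
    · have hww : w ≠ w' := by
        rintro rfl
        exact hvv (add_right_cancel h)
      have hu : (w' - w) ∈ D := by
        rw [hD]; exact ⟨w', hw', w, hw, Ne.symm hww, rfl⟩
      have hmem : M.mulVec (w' - w) ∈ D := by
        rw [hD]
        refine ⟨v, hv, v', hv', hvv, ?_⟩
        rw [Matrix.mulVec_sub]
        rw [sub_eq_sub_iff_add_eq_add]
        rw [h]; abel
      exact absurd hmem (hMD _ hu)
  constructor
  · intro x hx y hy x' hx' y' hy' hsum
    simp only [Finset.mem_union, Finset.mem_image] at hx hy hx' hy'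
    rcases hx with ⟨v, hv, rfl⟩ | ⟨v, hv, rfl⟩ <;>
      rcases hy with ⟨w, hw, rfl⟩ | ⟨w, hw, rfl⟩ <;>
      rcases hx' with ⟨v', hv', rfl⟩ | ⟨v', hv', rfl⟩ <;>
      rcases hy' with ⟨w', hw', rfl⟩ | ⟨w', hw', rfl⟩ <;>
      rw [snoc_add, snoc_add] at hsum <;>
      obtain ⟨he, hc⟩ := snoc_inj hsum <;>
      try omega
    -- AA AA
    · rcases hL v hv w hw v' hv' w' hw' he with ⟨rfl, rfl⟩ | ⟨rfl, rfl⟩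
      · exact Or.inl ⟨rfl, rfl⟩
      · exact Or.inr ⟨rfl, rfl⟩
    -- AB AB
    · obtain ⟨rfl, rfl⟩ := mixed v hv w hw v' hv' w' hw' he
      exact Or.inl ⟨rfl, rfl⟩
    -- AB BA
    · obtain ⟨rfl, rfl⟩ := mixed v hv w hw w' hw' v' hv'
        (by rw [he]; abel)
      exact Or.inr ⟨rfl, rfl⟩
    -- BA AB
    · obtain ⟨rfl, rfl⟩ := mixed w hw v hv v' hv' w' hw'
        (by rw [← he]; abel)
      exact Or.inr ⟨rfl, rfl⟩
    -- BA BA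
    · obtain ⟨rfl, rfl⟩ := mixed w hw v hv w' hw' v' hv'
        (by rw [add_comm w, he]; abel)
      exact Or.inl ⟨rfl, rfl⟩
    -- BB BB
    · rw [← Matrix.mulVec_add, ← Matrix.mulVec_add] at he
      rcases hL v hv w hw v' hv' w' hw' (Minj he) with ⟨rfl, rfl⟩ | ⟨rfl, rfl⟩
      · exact Or.inl ⟨rfl, rfl⟩
      · exact Or.inr ⟨rfl, rfl⟩
  · have inj1 : Function.Injective fun v : Fin n → ℤ => (Fin.snoc v 0 : Fin (n + 1) → ℤ) :=
      fun a b h => (snoc_inj h).1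
    have inj2 : Function.Injective fun v : Fin n → ℤ =>
        (Fin.snoc (M.mulVec v) 1 : Fin (n + 1) → ℤ) :=
      fun a b h => Minj (snoc_inj h).1
    have hdisj : Disjoint (L.image fun v => (Fin.snoc v 0 : Fin (n + 1) → ℤ))
        (L.image fun v => (Fin.snoc (M.mulVec v) 1 : Fin (n + 1) → ℤ)) := by
      rw [Finset.disjoint_left]
      rintro a ha hb
      simp only [Finset.mem_image] at ha hb
      obtain ⟨v, hv, rfl⟩ := ha
      obtain ⟨w, hw, h⟩ := hb
      have := (snoc_inj h).2
      omega
    rw [Finset.card_union_of_disjoint hdisj, Finset.card_image_of_injective _ inj1,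
      Finset.card_image_of_injective _ inj2]
    ring
end

section
/- Let D ⊆ Z^n (n ≥ 2) be a finite set with 0 ∉ D, and let R = max over u ∈ D and coordinates k of |u^(k)|. Define M to be the n×n integer matrix with 1's on the diagonal, R+1 on the superdiagonal, entry (1,1) equal to 1+(R+1)^2, and entry (2,1) equal to R+1, all other entries 0. Then M is unimodular, and for every u ∈ D, the vector Mu has some coordinate of absolute value greater than R; hence Mu ∉ D. -/
/-!
With `c = R + 1`, the matrix is an upper unitriangular matrix times a transvection, so its
determinant is `1`. For `u ≠ 0` with all `|u j| ≤ c - 1`, let `u k` be the first nonzero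
coordinate. If `k = 0`, then `|(M u) 0| = |(1 + c²) u 0 + c u 1| ≥ 1 + c² - c (c - 1) = c + 1`;
otherwise `(M u) (k - 1) = c u k`. Either way some coordinate of `M u` has absolute value at least
`c > R`, so `M u ∉ D`.
-/

open Matrix

theorem exists_ne_zero_forall_lt_eq_zero {ι M : Type*} [LT ι] [WellFoundedLT ι] [Zero M]
    {u : ι → M} (hu : u ≠ 0) : ∃ k, u k ≠ 0 ∧ ∀ j < k, u j = 0 := by
  obtain ⟨k, hk, hmin⟩ := wellFounded_lt.has_min {j | u j ≠ 0} (Function.ne_iff.1 hu)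
  exact ⟨k, hk, fun j hj => not_not.1 fun hj' => hmin j hj' hj⟩

theorem abs_le_sup_sup_natAbs {ι : Type*} [Fintype ι] {D : Finset (ι → ℤ)} {u : ι → ℤ}
    (hu : u ∈ D) (j : ι) :
    |u j| ≤ ((D.sup fun u => Finset.univ.sup fun k => (u k).natAbs : ℕ) : ℤ) := by
  rw [Int.abs_eq_natAbs, Nat.cast_le]
  exact Finset.le_sup_of_le hu (Finset.le_sup (f := fun k => (u k).natAbs) (Finset.mem_univ j))

section

variable {α : Type*} [CommRing α] {n : ℕ}

def shearMatrix (n : ℕ) (c : α) : Matrix (Fin n) (Fin n) α :=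
  Matrix.of fun i j : Fin n =>
    if (i : ℕ) = 0 ∧ (j : ℕ) = 0 then 1 + c ^ 2
    else if (i : ℕ) = 1 ∧ (j : ℕ) = 0 then c
    else if i = j then 1
    else if (j : ℕ) = (i : ℕ) + 1 then c
    else 0

def superdiagMatrix (n : ℕ) (c : α) : Matrix (Fin n) (Fin n) α :=
  Matrix.of fun i j : Fin n => if i = j then 1 else if (j : ℕ) = (i : ℕ) + 1 then c else 0

theorem det_superdiagMatrix (c : α) : (superdiagMatrix n c).det = 1 := by
  rw [det_of_isUpperTriangular]
  · simp [superdiagMatrix]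
  · intro i j (hji : j < i)
    rw [Fin.lt_def] at hji
    simp only [superdiagMatrix, of_apply, Fin.ext_iff]
    split_ifs <;> first | rfl | omega

theorem shearMatrix_eq_superdiagMatrix_mul_transvection (hn : 2 ≤ n) (c : α) :
    shearMatrix n c = superdiagMatrix n c * transvection ⟨1, hn⟩ ⟨0, by omega⟩ c := by
  ext i j
  rw [transvection, Matrix.mul_add, Matrix.mul_one, Matrix.add_apply]
  by_cases hj : j = ⟨0, by omega⟩
  · rw [hj, mul_single_apply_same]
    simp only [shearMatrix, superdiagMatrix, of_apply, Fin.ext_iff, and_true]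
    split_ifs <;> grind
  · rw [mul_single_apply_of_ne (hbj := hj)]
    simp only [shearMatrix, superdiagMatrix, of_apply, Fin.ext_iff] at hj ⊢
    split_ifs <;> grind

theorem det_shearMatrix (hn : 2 ≤ n) (c : α) : (shearMatrix n c).det = 1 := by
  rw [shearMatrix_eq_superdiagMatrix_mul_transvection hn, det_mul, det_superdiagMatrix,
    det_transvection_of_ne _ _ (by simp [Fin.ext_iff]), one_mul]

theorem shearMatrix_mulVec_zero (hn : 2 ≤ n) (c : α) (u : Fin n → α) :
    (shearMatrix n c *ᵥ u) ⟨0, by omega⟩ = (1 + c ^ 2) * u ⟨0, by omega⟩ + c * u ⟨1, hn⟩ := by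
  rw [mulVec, dotProduct, ← Finset.sum_subset (Finset.subset_univ {⟨0, by omega⟩, ⟨1, hn⟩}),
    Finset.sum_pair (by simp [Fin.ext_iff])]
  · simp [shearMatrix]
  · intro j _ hj
    simp only [Finset.mem_insert, Finset.mem_singleton, not_or, Fin.ext_iff] at hj
    simp only [shearMatrix, of_apply, Fin.ext_iff]
    split_ifs <;> first | omega | simp

theorem shearMatrix_mulVec_of_forall_lt_eq_zero (c : α) (u : Fin n → α) {i k : Fin n}
    (hik : (k : ℕ) = i + 1) (hu : ∀ j < k, u j = 0) :
    (shearMatrix n c *ᵥ u) i = c * u k := by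
  rw [mulVec, dotProduct, Finset.sum_eq_single k]
  · simp only [shearMatrix, of_apply, Fin.ext_iff]
    split_ifs <;> first | rfl | omega
  · intro j _ hjk
    rcases lt_or_gt_of_ne hjk with hj | hj
    · rw [hu j hj, mul_zero]
    · have : (k : ℕ) < j := hj
      simp only [shearMatrix, of_apply, Fin.ext_iff]
      split_ifs <;> first | omega | simp
  · simp

theorem exists_le_abs_shearMatrix_mulVec (hn : 2 ≤ n) {c : ℤ} {u : Fin n → ℤ} (hu : u ≠ 0)
    (hbound : ∀ j, |u j| < c) : ∃ i, c ≤ |(shearMatrix n c *ᵥ u) i| := by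
  obtain ⟨k, huk, hlt⟩ := exists_ne_zero_forall_lt_eq_zero hu
  have hk : 1 ≤ |u k| := Int.one_le_abs huk
  have hc : 0 ≤ c := (abs_nonneg _).trans (hbound k).le
  obtain ⟨_ | i, hi⟩ := k
  · refine ⟨⟨0, by omega⟩, ?_⟩
    have h1 : |u ⟨1, hn⟩| ≤ c - 1 := by linarith [hbound ⟨1, hn⟩]
    rw [shearMatrix_mulVec_zero hn]
    calc c ≤ (1 + c ^ 2) * 1 - c * (c - 1) := by nlinarith
      _ ≤ (1 + c ^ 2) * |u ⟨0, _⟩| - c * |u ⟨1, hn⟩| := by gcongr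
      _ = |(1 + c ^ 2) * u ⟨0, _⟩| - |-(c * u ⟨1, hn⟩)| := by
        rw [abs_neg, abs_mul, abs_mul, abs_of_nonneg hc,
          abs_of_nonneg (by positivity : (0 : ℤ) ≤ 1 + c ^ 2)]
      _ ≤ |(1 + c ^ 2) * u ⟨0, _⟩ - -(c * u ⟨1, hn⟩)| := abs_sub_abs_le_abs_sub _ _
      _ = _ := by rw [sub_neg_eq_add]
  · refine ⟨⟨i, by omega⟩, ?_⟩
    rw [shearMatrix_mulVec_of_forall_lt_eq_zero c u rfl hlt, abs_mul, abs_of_nonneg hc]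
    exact le_mul_of_one_le_right hc hk

end

theorem shear_matrix_escapes {n : ℕ} (hn : 2 ≤ n) (D : Finset (Fin n → ℤ))
    (h0 : (0 : Fin n → ℤ) ∉ D)
    (R : ℕ) (hR : R = D.sup fun u => Finset.univ.sup fun k => (u k).natAbs)
    (M : Matrix (Fin n) (Fin n) ℤ)
    (hM : M = Matrix.of fun i j : Fin n =>
      if (i : ℕ) = 0 ∧ (j : ℕ) = 0 then 1 + ((R : ℤ) + 1) ^ 2
      else if (i : ℕ) = 1 ∧ (j : ℕ) = 0 then (R : ℤ) + 1
      else if i = j then 1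
      else if (j : ℕ) = (i : ℕ) + 1 then (R : ℤ) + 1
      else 0) :
    (M.det = 1 ∨ M.det = -1) ∧
    (∀ u ∈ D, ∃ k, (R : ℤ) < |M.mulVec u k|) ∧
    (∀ u ∈ D, M.mulVec u ∉ D) := by
  change M = shearMatrix n ((R : ℤ) + 1) at hM
  subst hM
  have hbound : ∀ u ∈ D, ∀ j, |u j| < (R : ℤ) + 1 := fun u hu j => by
    have := hR ▸ abs_le_sup_sup_natAbs hu j
    omega
  have hescape : ∀ u ∈ D, ∃ k, (R : ℤ) < |(shearMatrix n ((R : ℤ) + 1) *ᵥ u) k| := by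
    intro u hu
    obtain ⟨k, hk⟩ :=
      exists_le_abs_shearMatrix_mulVec hn (ne_of_mem_of_not_mem hu h0) (hbound u hu)
    exact ⟨k, by omega⟩
  refine ⟨.inl (det_shearMatrix hn _), hescape, fun u hu hMu => ?_⟩
  obtain ⟨k, hk⟩ := hescape u hu
  have := hbound _ hMu k
  omega
end
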